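/- For multi-indices μ, ν ∈ ℕ³ with n = |ν|, the partial derivative ∂_ν P_μ (where ∂_ν = ∂^{|ν|}/∂x₁^{n₁}∂x₂^{n₂}∂x₃^{n₃}) equals (−1)^n P_{μ−ν} if μ ≥ ν componentwise, and equals 0 otherwise. -/

import Mathlib

open Quaternion

noncomputable section

abbrev Hq := Quaternion ℝ

/-- The quaternion units `e₁ = i`, `e₂ = j`, `e₃ = k` (with `e₀ = 1`). -/
def e : Fin 4 → Hq := ![1, ⟨0,1,0,0⟩, ⟨0,0,1,0⟩, ⟨0,0,0,1⟩]

/-- Real coordinates of a quaternion `q = t + i x₁ + j x₂ + k x₃`. -/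
def coord (q : Hq) : Fin 4 → ℝ := ![q.re, q.imI, q.imJ, q.imK]

/-- The regular variables `z_i(q) = t e_i - x_i` (here `i : Fin 3` corresponds to `i+1`). -/
def z (i : Fin 3) (q : Hq) : Hq := q.re • e i.succ - coord q i.succ • (1 : Hq)

/-- `|ν| = n₁ + n₂ + n₃` for a multi-index `ν ∈ ℕ³`. -/
def msum (ν : Fin 3 → ℕ) : ℕ := ν 0 + ν 1 + ν 2

/-- The regular homogeneous polynomial `P_ν(q)`. -/
def Pp (ν : Fin 3 → ℕ) (q : Hq) : Hq :=
  ((msum ν).factorial : ℝ)⁻¹ •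
    ∑ f ∈ Finset.univ.filter
        (fun f : Fin (msum ν) → Fin 3 =>
          ∀ j, (Finset.univ.filter fun i => f i = j).card = ν j),
      ((List.ofFn f).map (fun i => z i q)).prod

/-- The partial derivative `∂/∂x_{i+1}` of an `ℍ`-valued function. -/
def pd (i : Fin 3) (f : Hq → Hq) : Hq → Hq := fun q => fderiv ℝ f q (e i.succ)

/-- The iterated partial derivative `∂_ν = ∂^{|ν|}/∂x₁^{n₁} ∂x₂^{n₂} ∂x₃^{n₃}`. -/
def pdnu (ν : Fin 3 → ℕ) (f : Hq → Hq) : Hq → Hq :=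
  (pd 0)^[ν 0] ((pd 1)^[ν 1] ((pd 2)^[ν 2] f))

/-!
`P_μ` is `1/|μ|!` times the sum, over all words in the letters `0, 1, 2` with letter
multiplicities `μ`, of the ordered product of the corresponding `z_i`. Each `z_i` is real-linear
with `∂z_i/∂x_j = -δ_ij`, a real (hence central) scalar, so by the Leibniz rule `∂/∂x_j` of a
word is minus the sum of the words obtained by deleting one occurrence of the letter `j`.
For a fixed position `k`, deleting the letter there is a bijection from the words of content `μ`
carrying `j` at position `k` onto the words of content `μ - e_j`; hence `∂/∂x_j` of the whole
sum is `-|μ|` times the sum for `μ - e_j`, and the factorials give `∂P_μ/∂x_j = -P_{μ-e_j}`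
(and `0` when `μ_j = 0`). Iterating in each variable gives the theorem.
-/

open Finset
open scoped Nat

section Words

variable {ι : Type*} [DecidableEq ι]

theorem card_filter_eq_card_filter_removeNth_add {m : ℕ} (f : Fin (m + 1) → ι)
    (k : Fin (m + 1)) (j : ι) :
    #{i | f i = j} = #{i | k.removeNth f i = j} + if f k = j then 1 else 0 := by
  rw [card_filter, card_filter, Fin.sum_univ_succAbove _ k, add_comm]
  rfl

variable [Fintype ι]

def wordsWithContent (m : ℕ) (c : ι → ℕ) : Finset (Fin m → ι) :=
  {f | ∀ j, #{i | f i = j} = c j}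

theorem mem_wordsWithContent_succ_iff {m : ℕ} {c : ι → ℕ} {f : Fin (m + 1) → ι}
    (k : Fin (m + 1)) :
    f ∈ wordsWithContent (m + 1) c ↔
      c (f k) ≠ 0 ∧ k.removeNth f ∈ wordsWithContent m (c - Pi.single (f k) 1) := by
  simp only [wordsWithContent, mem_filter, mem_univ, true_and,
    card_filter_eq_card_filter_removeNth_add f k, Pi.sub_apply, Pi.single_apply]
  refine ⟨fun hf => ⟨?_, fun j => ?_⟩, fun ⟨hk, hf⟩ j => ?_⟩
  · have hfk := hf (f k)
    simp only [if_true] at hfk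
    omega
  all_goals
    have hj := hf j
    by_cases h : j = f k
    · subst h; simp only [if_true] at hj ⊢; omega
    · simp only [h, Ne.symm h, if_false] at hj ⊢; omega

theorem apply_ne_of_mem_wordsWithContent {m : ℕ} {c : ι → ℕ} {f : Fin m → ι}
    (hf : f ∈ wordsWithContent m c) {j : ι} (hj : c j = 0) (k : Fin m) : f k ≠ j := by
  rintro rfl
  have hcard := (mem_filter.mp hf).2 (f k)
  rw [hj, card_eq_zero, filter_eq_empty_iff] at hcard
  exact hcard (mem_univ k) rfl

variable {M : Type*} [AddCommMonoid M]

theorem sum_filter_wordsWithContent_removeNth {m : ℕ} {c : ι → ℕ} {j : ι} (hj : c j ≠ 0)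
    (F : (Fin m → ι) → M) (k : Fin (m + 1)) :
    ∑ f ∈ wordsWithContent (m + 1) c with f k = j, F (k.removeNth f) =
      ∑ g ∈ wordsWithContent m (c - Pi.single j 1), F g := by
  refine sum_nbij' k.removeNth (fun g => k.insertNth j g) ?_ ?_ ?_ ?_ fun _ _ => rfl
  · intro f hf
    obtain ⟨hmem, rfl⟩ := mem_filter.mp hf
    exact ((mem_wordsWithContent_succ_iff k).mp hmem).2
  · intro g hg
    refine mem_filter.mpr ⟨(mem_wordsWithContent_succ_iff k).mpr ?_, by simp⟩
    simpa [hj] using hg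
  · intro f hf
    obtain ⟨-, rfl⟩ := mem_filter.mp hf
    exact Fin.insertNth_self_removeNth k f
  · intro g _
    exact Fin.removeNth_insertNth (α := fun _ => ι) k j g

theorem sum_wordsWithContent_sum_removeNth {m : ℕ} {c : ι → ℕ} {j : ι} (hj : c j ≠ 0)
    (F : (Fin m → ι) → M) :
    ∑ f ∈ wordsWithContent (m + 1) c, ∑ k with f k = j, F (k.removeNth f) =
      (m + 1) • ∑ g ∈ wordsWithContent m (c - Pi.single j 1), F g := by
  simp_rw [sum_filter]
  rw [sum_comm]
  simp_rw [← sum_filter, sum_filter_wordsWithContent_removeNth hj]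
  simp

end Words

theorem List.ofFn_removeNth {α : Type*} {m : ℕ} (f : Fin (m + 1) → α) (k : Fin (m + 1)) :
    List.ofFn (k.removeNth f) = (List.ofFn f).eraseIdx k := by
  refine List.ext_getElem (by simp [List.length_eraseIdx]; omega) fun i h₁ h₂ => ?_
  simp only [List.getElem_ofFn, List.getElem_eraseIdx, Fin.removeNth, Fin.succAbove]
  split_ifs <;> simp_all [Fin.lt_def]

section WordProducts

variable {𝕜 E A ι : Type*} [NontriviallyNormedField 𝕜] [NormedAddCommGroup E] [NormedSpace 𝕜 E]
  [NormedRing A] [NormedAlgebra 𝕜 A] (L : ι → E →L[𝕜] A)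

def wordProd {m : ℕ} (f : Fin m → ι) (q : E) : A :=
  ((List.ofFn f).map fun i => L i q).prod

theorem differentiable_wordProd {m : ℕ} (f : Fin m → ι) : Differentiable 𝕜 (wordProd L f) :=
  fun _ => (HasFDerivAt.list_prod' fun i _ => (L i).hasFDerivAt).differentiableAt

variable {L} [DecidableEq ι]

theorem fderiv_wordProd_apply {v : E} {j : ι} {a : 𝕜}
    (hL : ∀ i, L i v = if i = j then algebraMap 𝕜 A a else 0) {m : ℕ} (f : Fin (m + 1) → ι)
    (q : E) :
    fderiv 𝕜 (wordProd L f) q v = a • ∑ k with f k = j, wordProd L (k.removeNth f) q := by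
  unfold wordProd
  rw [fderiv_list_prod' fun i _ => (L i).differentiableAt, _root_.sum_apply, smul_sum,
    sum_filter]
  refine Fintype.sum_equiv (finCongr (List.length_ofFn)) _ _ fun k => ?_
  obtain ⟨k, hk⟩ := k
  simp only [_root_.smul_apply, ContinuousLinearMap.fderiv, hL, Fin.getElem_fin,
    List.getElem_ofFn, finCongr_apply, Fin.cast_mk]
  split_ifs
  · simp [List.ofFn_removeNth, List.eraseIdx_eq_take_drop_succ, Algebra.smul_def,
      Algebra.commutes, mul_assoc]
  · simp

variable [Fintype ι]

variable (L) in
def wordSum (m : ℕ) (c : ι → ℕ) (q : E) : A :=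
  ∑ f ∈ wordsWithContent m c, wordProd L f q

theorem fderiv_wordSum_apply {v : E} {j : ι} {a : 𝕜}
    (hL : ∀ i, L i v = if i = j then algebraMap 𝕜 A a else 0) {m : ℕ} {c : ι → ℕ}
    (hc : c j ≠ 0) (q : E) :
    fderiv 𝕜 (wordSum L (m + 1) c) q v =
      ((m + 1 : 𝕜) * a) • wordSum L m (c - Pi.single j 1) q := by
  unfold wordSum
  rw [fderiv_fun_sum fun f _ => (differentiable_wordProd L f).differentiableAt, _root_.sum_apply]
  simp_rw [fderiv_wordProd_apply hL, ← smul_sum]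
  rw [sum_wordsWithContent_sum_removeNth hc (wordProd L · q), mul_comm, mul_smul]
  norm_cast

theorem fderiv_wordSum_apply_eq_zero {v : E} {j : ι} {a : 𝕜}
    (hL : ∀ i, L i v = if i = j then algebraMap 𝕜 A a else 0) {m : ℕ} {c : ι → ℕ}
    (hc : c j = 0) (q : E) :
    fderiv 𝕜 (wordSum L m c) q v = 0 := by
  cases m with
  | zero =>
    have hconst : wordSum L 0 c = fun _ => ∑ _f ∈ wordsWithContent 0 c, (1 : A) := by
      ext; simp [wordSum, wordProd]
    simp [hconst]
  | succ m =>
    unfold wordSum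
    rw [fderiv_fun_sum fun f _ => (differentiable_wordProd L f).differentiableAt,
      _root_.sum_apply]
    refine sum_eq_zero fun f hf => ?_
    rw [fderiv_wordProd_apply hL, filter_false_of_mem fun k _ =>
      apply_ne_of_mem_wordsWithContent hf hc k, sum_empty, smul_zero]

end WordProducts

def zCLM (i : Fin 3) : Hq →L[ℝ] Hq :=
  LinearMap.toContinuousLinearMap
    { toFun := z i
      map_add' := fun a b => by fin_cases i <;> simp [z, coord, add_smul] <;> abel
      map_smul' := fun r a => by fin_cases i <;> simp [z, coord, smul_sub, mul_smul] }

theorem zCLM_apply (i : Fin 3) (q : Hq) : zCLM i q = z i q := rfl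

theorem zCLM_apply_e (i j : Fin 3) :
    zCLM i (e j.succ) = if i = j then algebraMap ℝ Hq (-1) else 0 := by
  rw [zCLM_apply]
  -- `z` scales by `re` through `Mul.toSMul`, which `simp`'s `zero_smul` does not match
  fin_cases i <;> fin_cases j <;> ext <;> simp [z, e, coord] <;> exact zero_mul _

theorem Pp_eq_smul_wordSum {μ : Fin 3 → ℕ} {m : ℕ} (h : msum μ = m) :
    Pp μ = (m ! : ℝ)⁻¹ • wordSum zCLM m μ := by
  subst h
  ext1 q
  simp only [Pi.smul_apply, Pp, wordSum, wordProd, wordsWithContent, zCLM_apply]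
  -- the two filters differ only in their (subsingleton) decidability instances
  congr

theorem msum_sub_single_add_one {μ : Fin 3 → ℕ} {j : Fin 3} (h : μ j ≠ 0) :
    msum (μ - Pi.single j 1) + 1 = msum μ := by
  fin_cases j <;> simp_all [msum] <;> omega

theorem pd_Pp_of_ne_zero {μ : Fin 3 → ℕ} {j : Fin 3} (h : μ j ≠ 0) :
    pd j (Pp μ) = -Pp (μ - Pi.single j 1) := by
  ext1 q
  rw [pd, Pp_eq_smul_wordSum (msum_sub_single_add_one h).symm, fderiv_const_smul_field,
    Pp_eq_smul_wordSum rfl]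
  simp only [Pi.smul_apply, _root_.smul_apply, fderiv_wordSum_apply (zCLM_apply_e · j) h,
    smul_smul, Pi.neg_apply, ← neg_smul]
  congr 1
  rw [Nat.factorial_succ]
  push_cast
  field_simp

theorem pd_Pp_of_eq_zero {μ : Fin 3 → ℕ} {j : Fin 3} (h : μ j = 0) : pd j (Pp μ) = 0 := by
  ext1 q
  rw [pd, Pp_eq_smul_wordSum rfl, fderiv_const_smul_field]
  simp [fderiv_wordSum_apply_eq_zero (zCLM_apply_e · j) h]

theorem pd_smul (j : Fin 3) (c : ℝ) (f : Hq → Hq) : pd j (c • f) = c • pd j f := by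
  ext1 q
  simp [pd, fderiv_const_smul_field]

theorem pd_zero (j : Fin 3) : pd j 0 = 0 := by
  ext1 q
  simp [pd]

theorem iterate_pd_smul (j : Fin 3) (n : ℕ) (c : ℝ) (f : Hq → Hq) :
    (pd j)^[n] (c • f) = c • (pd j)^[n] f :=
  Function.Commute.iterate_left (pd_smul j c) n f

theorem iterate_pd_Pp (j : Fin 3) (μ : Fin 3 → ℕ) (n : ℕ) :
    (pd j)^[n] (Pp μ) = if n ≤ μ j then ((-1 : ℝ) ^ n) • Pp (μ - Pi.single j n) else 0 := by
  induction n with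
  | zero => simp
  | succ n ih =>
    rw [Function.iterate_succ_apply', ih]
    have hμ : (μ - Pi.single j n : Fin 3 → ℕ) j = μ j - n := by rw [Pi.sub_apply, Pi.single_eq_same]
    split_ifs with hn hn'
    · rw [pd_smul, pd_Pp_of_ne_zero (by omega), tsub_tsub, ← Pi.single_add, pow_succ,
        mul_neg_one, neg_smul, smul_neg]
    · rw [pd_smul, pd_Pp_of_eq_zero (by omega), smul_zero]
    · omega
    · exact pd_zero j

theorem iterate_pd_ite_smul_Pp (j : Fin 3) (μ : Fin 3 → ℕ) (n : ℕ) (p : Prop) [Decidable p]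
    (c : ℝ) :
    (pd j)^[n] (if p then c • Pp μ else 0) =
      if p ∧ n ≤ μ j then ((-1 : ℝ) ^ n * c) • Pp (μ - Pi.single j n) else 0 := by
  by_cases hp : p
  · simp only [hp, if_true, true_and, iterate_pd_smul, iterate_pd_Pp, smul_ite, smul_smul,
      mul_comm c, smul_zero]
  · simp only [hp, if_false, false_and, Function.iterate_fixed (pd_zero j)]

/-- `∂_ν P_μ = (-1)^{|ν|} P_{μ-ν}` if `μ ≥ ν` componentwise, and `0` otherwise. -/
theorem pdnu_Pp (μ ν : Fin 3 → ℕ) :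
    pdnu ν (Pp μ) =
      if ∀ i, ν i ≤ μ i then (fun q => ((-1 : ℝ) ^ msum ν) • Pp (μ - ν) q)
      else 0 := by
  have hcond : ((ν 2 ≤ μ 2 ∧ ν 1 ≤ (μ - Pi.single 2 (ν 2) : Fin 3 → ℕ) 1) ∧
      ν 0 ≤ (μ - Pi.single 2 (ν 2) - Pi.single 1 (ν 1) : Fin 3 → ℕ) 0) ↔ ∀ i, ν i ≤ μ i := by
    simp only [Fin.forall_fin_succ, IsEmpty.forall_iff, Pi.sub_apply, ne_eq, Fin.reduceEq,
      not_false_eq_true, Pi.single_eq_of_ne, tsub_zero]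
    tauto
  have hsign : (-1 : ℝ) ^ ν 0 * ((-1) ^ ν 1 * (-1) ^ ν 2) = (-1) ^ msum ν := by
    rw [msum, pow_add, pow_add]
    ring
  have hindex : μ - Pi.single 2 (ν 2) - Pi.single 1 (ν 1) - Pi.single 0 (ν 0) = μ - ν := by
    ext i
    fin_cases i <;> simp
  rw [pdnu, iterate_pd_Pp, iterate_pd_ite_smul_Pp, iterate_pd_ite_smul_Pp, hsign, hindex]
  exact if_congr hcond rfl rfl
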